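/- arXiv:1805.02412 — 3 statements merged into one kernel-verified Lean document; each statement's English description precedes it below -/
import Mathlib

section
/- Let G be a finite simple graph, IR an irredundant set of G, and D ⊆ V(G). Then D is a minimal dominating set of G if and only if D dominates IR and Priv_IR(D,x) ≠ ∅ for every x ∈ D. -/
variable {V : Type*}

/-- The closed neighborhood `N[x]` of a vertex. -/
def cnbr (G : SimpleGraph V) (x : V) : Set V := insert x (G.neighborSet x)

/-- `N[X] = ⋃ x ∈ X, N[x]`. -/
def cnbrSet (G : SimpleGraph V) (X : Set V) : Set V := ⋃ x ∈ X, cnbr G x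

/-- `N(X) = N[X] \ X`. -/
def onbrSet (G : SimpleGraph V) (X : Set V) : Set V := cnbrSet G X \ X

/-- `D` dominates `X` if `X ⊆ N[D]`. -/
def Dominates (G : SimpleGraph V) (D X : Set V) : Prop := X ⊆ cnbrSet G D

/-- `D` is a minimal dominating set of `G`. -/
def IsMinDomSet (G : SimpleGraph V) (D : Set V) : Prop :=
  Dominates G D Set.univ ∧ ∀ D' : Set V, D' ⊂ D → ¬ Dominates G D' Set.univ

/-- `Priv(D, x)`: private neighbors of `x` w.r.t. `D`. -/
def priv (G : SimpleGraph V) (D : Set V) (x : V) : Set V := {u | cnbr G u ∩ D = {x}}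

/-- `IR` is an irredundant set of `G`. -/
def IsIrredundantSet (G : SimpleGraph V) (IR : Set V) : Prop :=
  (∀ v : V, ∃ x ∈ IR, cnbr G x ⊆ cnbr G v) ∧
  (∀ x ∈ IR, ∀ v : V, ¬ cnbr G v ⊂ cnbr G x) ∧
  (∀ x ∈ IR, ∀ y ∈ IR, x ≠ y → cnbr G x ≠ cnbr G y)

/-- `Priv_IR(D, x) = Priv(D, x) ∩ IR`. -/
def privIR (G : SimpleGraph V) (IR D : Set V) (x : V) : Set V := priv G D x ∩ IR

/-- `A ∈ D_RN(G)`: `A` is the intersection of a minimal dominating set with `RN = V \ IR`. -/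
def memDRN (G : SimpleGraph V) (IR A : Set V) : Prop :=
  ∃ D : Set V, IsMinDomSet G D ∧ A = D ∩ IRᶜ

/-- `G` is `P_k`-free: it has no induced path on `k` vertices. -/
def PkFree (G : SimpleGraph V) (k : ℕ) : Prop :=
  ¬ ∃ f : Fin k → V, Function.Injective f ∧
      ∀ i j : Fin k, G.Adj (f i) (f j) ↔ (i.val + 1 = j.val ∨ j.val + 1 = i.val)

/-- `G` is chordal: no induced cycle on `n ≥ 4` vertices. -/
def Chordal (G : SimpleGraph V) : Prop :=
  ∀ n : ℕ, 4 ≤ n → ¬ ∃ f : ZMod n → V, Function.Injective f ∧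
      ∀ i j : ZMod n, G.Adj (f i) (f j) ↔ (i = j + 1 ∨ j = i + 1)

/-- `C` is a connected component of the subgraph of `G` induced by `S`. -/
def IsCompOf (G : SimpleGraph V) (S C : Set V) : Prop :=
  C ⊆ S ∧ C.Nonempty ∧ (G.induce C).Connected ∧
    ∀ x ∈ C, ∀ y ∈ S, G.Adj x y → y ∈ C

/-- `B(A)`: the elements of `A` having an irredundant private neighbor in some irredundant
component entirely contained in `N(A)`. -/
def Bset (G : SimpleGraph V) (IR A : Set V) : Set V :=
  {a ∈ A | ∃ C : Set V, IsCompOf G IR C ∧ C ⊆ onbrSet G A ∧ (privIR G IR A a ∩ C).Nonempty}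

/-- Domination inside the subgraph induced by `C`: every `u ∈ X` equals, or is adjacent
(within `C`) to, some `d ∈ D`.  For `D, X ⊆ C` this is domination in `G[C]`. -/
def domIn (G : SimpleGraph V) (C D X : Set V) : Prop :=
  ∀ u ∈ X, ∃ d ∈ D, u = d ∨ (G.Adj d u ∧ d ∈ C ∧ u ∈ C)


lemma mem_cnbr_iff {G : SimpleGraph V} {x y : V} : y ∈ cnbr G x ↔ y = x ∨ G.Adj x y := by
  simp [cnbr, SimpleGraph.mem_neighborSet]

lemma mem_cnbr_comm {G : SimpleGraph V} {x y : V} : y ∈ cnbr G x ↔ x ∈ cnbr G y := by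
  simp only [mem_cnbr_iff]
  constructor <;> rintro (h | h)
  · exact Or.inl h.symm
  · exact Or.inr h.symm
  · exact Or.inl h.symm
  · exact Or.inr h.symm

lemma mem_cnbrSet_iff {G : SimpleGraph V} {D : Set V} {u : V} :
    u ∈ cnbrSet G D ↔ ∃ d ∈ D, u ∈ cnbr G d := by
  simp [cnbrSet]

/-- `D` is a minimal dominating set iff it dominates `IR` and every
`x ∈ D` has an irredundant private neighbor. -/
theorem stmt_1 [Fintype V] (G : SimpleGraph V) (IR : Set V)
    (hIR : IsIrredundantSet G IR) (D : Set V) :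
    IsMinDomSet G D ↔
      (Dominates G D IR ∧ ∀ x ∈ D, (privIR G IR D x).Nonempty) := by
  constructor
  · rintro ⟨hdom, hmin⟩
    refine ⟨fun v _ => hdom (Set.mem_univ v), fun x hx => ?_⟩
    -- D \ {x} is not dominating
    have hssub : D \ {x} ⊂ D := by
      constructor
      · exact Set.diff_subset
      · intro h
        exact (h hx).2 rfl
    have := hmin (D \ {x}) hssub
    rw [Dominates, Set.not_subset] at this
    obtain ⟨v, -, hv⟩ := this
    -- v is dominated by D, but only via x
    have hvD : v ∈ cnbrSet G D := hdom (Set.mem_univ v)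
    rw [mem_cnbrSet_iff] at hvD
    obtain ⟨d, hdD, hvd⟩ := hvD
    have hdx : d = x := by
      by_contra hne
      exact hv (mem_cnbrSet_iff.mpr ⟨d, ⟨hdD, hne⟩, hvd⟩)
    subst hdx
    -- so x ∈ N[v] and N[v] ∩ D = {d}... find w ∈ IR with N[w] ⊆ N[v]
    obtain ⟨w, hwIR, hw⟩ := hIR.1 v
    -- D dominates w (it's in IR ⊆ univ)
    have hwdom : w ∈ cnbrSet G D := hdom (Set.mem_univ w)
    rw [mem_cnbrSet_iff] at hwdom
    obtain ⟨e, heD, hwe⟩ := hwdom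
    have hew : e ∈ cnbr G w := mem_cnbr_comm.mp hwe
    refine ⟨w, ⟨?_, hwIR⟩⟩
    -- show N[w] ∩ D = {d}
    apply Set.eq_singleton_iff_unique_mem.mpr
    constructor
    · have hed : e = d := by
        by_contra hne
        have : v ∈ cnbr G e := mem_cnbr_comm.mp (hw hew)
        exact hv (mem_cnbrSet_iff.mpr ⟨e, ⟨heD, hne⟩, this⟩)
      exact ⟨hed ▸ hew, hdD⟩
    · rintro y ⟨hyw, hyD⟩
      by_contra hne
      have hyv : v ∈ cnbr G y := mem_cnbr_comm.mp (hw hyw)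
      exact hv (mem_cnbrSet_iff.mpr ⟨y, ⟨hyD, hne⟩, hyv⟩)
  · rintro ⟨hdomIR, hpriv⟩
    constructor
    · intro v _
      obtain ⟨w, hwIR, hw⟩ := hIR.1 v
      obtain ⟨d, hdD, hwd⟩ := mem_cnbrSet_iff.mp (hdomIR hwIR)
      have : v ∈ cnbr G d := mem_cnbr_comm.mp (hw (mem_cnbr_comm.mp hwd))
      exact mem_cnbrSet_iff.mpr ⟨d, hdD, this⟩
    · intro D' hD' hdom'
      obtain ⟨x, hxD, hxD'⟩ := Set.exists_of_ssubset hD'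
      obtain ⟨u, hu, huIR⟩ := hpriv x hxD
      have hu' : cnbr G u ∩ D = {x} := hu
      obtain ⟨d, hdD', hud⟩ := mem_cnbrSet_iff.mp (hdom' (Set.mem_univ u))
      have : d ∈ cnbr G u ∩ D := ⟨mem_cnbr_comm.mp hud, hD'.1 hdD'⟩
      rw [hu'] at this
      exact hxD' (this ▸ hdD')
end

section
/- Let k ≥ 6 be an integer, let G be a finite simple chordal graph that is P_k-free, let IR be an irredundant set of G, and let C be an irredundant component of G (a connected component of the induced subgraph G[IR]). Then the induced subgraph G[C] is P_{k-4}-free (and chordal). -/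
variable {V : Type*}

lemma mem_cnbr {G : SimpleGraph V} {x v : V} : v ∈ cnbr G x ↔ v = x ∨ G.Adj x v := by
  simp [cnbr]

def IsIndPath (G : SimpleGraph V) (n : ℕ) (f : Fin n → V) : Prop :=
  Function.Injective f ∧
    ∀ i j : Fin n, G.Adj (f i) (f j) ↔ (i.val + 1 = j.val ∨ j.val + 1 = i.val)

lemma fan_lemma {G : SimpleGraph V} (hch : Chordal G) {m : ℕ} {p : Fin m → V}
    (hp : IsIndPath G m p) {x : V} {lo hi : ℕ} (hlh : lo + 2 ≤ hi) (hhi : hi < m)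
    (hxlo : G.Adj x (p ⟨lo, by omega⟩))
    (hxhi : G.Adj x (p ⟨hi, hhi⟩))
    (hmid : ∀ i : Fin m, lo < i.val → i.val < hi → ¬ G.Adj x (p i) ∧ x ≠ p i) :
    False := by
  obtain ⟨n, hn⟩ : ∃ n, n = hi - lo + 2 := ⟨_, rfl⟩
  have h4 : 4 ≤ n := by omega
  haveI : NeZero n := ⟨by omega⟩
  haveI : Fact (1 < n) := ⟨by omega⟩
  set F : ℕ → V := fun t => if t = 0 then x else p ⟨min (lo + t - 1) hi, by omega⟩ with hF
  have hF0 : F 0 = x := by simp [hF]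
  have hFt : ∀ t, 0 < t → F t = p ⟨min (lo + t - 1) hi, by omega⟩ := by
    intro t ht
    simp only [hF]
    rw [if_neg (by omega)]
  have hFadj0 : ∀ t, 0 < t → t < n → (G.Adj x (F t) ↔ (t = 1 ∨ t = n - 1)) := by
    intro t ht0 htn
    rw [hFt t ht0]
    by_cases h1 : t = 1
    · have he : (⟨min (lo + t - 1) hi, by omega⟩ : Fin m) = ⟨lo, by omega⟩ :=
        Fin.ext (show min (lo + t - 1) hi = lo by omega)
      rw [he]
      exact iff_of_true hxlo (by omega)
    · by_cases h2 : t = n - 1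
      · have he : (⟨min (lo + t - 1) hi, by omega⟩ : Fin m) = ⟨hi, hhi⟩ :=
          Fin.ext (show min (lo + t - 1) hi = hi by omega)
        rw [he]
        exact iff_of_true hxhi (by omega)
      · apply iff_of_false
        · exact (hmid ⟨min (lo + t - 1) hi, by omega⟩
            (show lo < min (lo + t - 1) hi by omega)
            (show min (lo + t - 1) hi < hi by omega)).1
        · omega
  have hFne0 : ∀ t, 0 < t → t < n → x ≠ F t := by
    intro t ht0 htn
    rw [hFt t ht0]
    by_cases h1 : t = 1
    · have he : (⟨min (lo + t - 1) hi, by omega⟩ : Fin m) = ⟨lo, by omega⟩ :=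
        Fin.ext (show min (lo + t - 1) hi = lo by omega)
      rw [he]; exact hxlo.ne
    · by_cases h2 : t = n - 1
      · have he : (⟨min (lo + t - 1) hi, by omega⟩ : Fin m) = ⟨hi, hhi⟩ :=
          Fin.ext (show min (lo + t - 1) hi = hi by omega)
        rw [he]; exact hxhi.ne
      · exact (hmid ⟨min (lo + t - 1) hi, by omega⟩
            (show lo < min (lo + t - 1) hi by omega)
            (show min (lo + t - 1) hi < hi by omega)).2
  have hFpp : ∀ s t, 0 < s → s < n → 0 < t → t < n →
      (G.Adj (F s) (F t) ↔ (s + 1 = t ∨ t + 1 = s)) := by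
    intro s t hs0 hsn ht0 htn
    rw [hFt s hs0, hFt t ht0, hp.2]
    show (min (lo + s - 1) hi + 1 = min (lo + t - 1) hi ∨
      min (lo + t - 1) hi + 1 = min (lo + s - 1) hi) ↔ _
    omega
  have hFinj : ∀ s t, s < n → t < n → F s = F t → s = t := by
    intro s t hsn htn h
    by_cases hs0 : s = 0 <;> by_cases ht0 : t = 0
    · omega
    · exact absurd (by rw [← h, hs0, hF0]) (hFne0 t (by omega) htn)
    · exact absurd (by rw [h, ht0, hF0]) (hFne0 s (by omega) hsn)
    · rw [hFt s (by omega), hFt t (by omega)] at h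
      have h2 := hp.1 h
      have h3 : min (lo + s - 1) hi = min (lo + t - 1) hi := congrArg Fin.val h2
      omega
  apply hch n h4
  refine ⟨fun z => F z.val, ?_, ?_⟩
  · intro z w h
    exact ZMod.val_injective n (hFinj z.val w.val (ZMod.val_lt z) (ZMod.val_lt w) h)
  · intro i j
    show G.Adj (F i.val) (F j.val) ↔ _
    have hiv := ZMod.val_lt i
    have hjv := ZMod.val_lt j
    have e1 : (i = j + 1) ↔ i.val = (j.val + 1) % n := by
      constructor
      · intro h; rw [h, ZMod.val_add, ZMod.val_one]
      · intro h; exact ZMod.val_injective n (by rw [ZMod.val_add, ZMod.val_one]; exact h)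
    have e2 : (j = i + 1) ↔ j.val = (i.val + 1) % n := by
      constructor
      · intro h; rw [h, ZMod.val_add, ZMod.val_one]
      · intro h; exact ZMod.val_injective n (by rw [ZMod.val_add, ZMod.val_one]; exact h)
    rw [e1, e2]
    have m1 : ((j.val + 1) % n = j.val + 1 ∧ j.val + 1 < n) ∨ ((j.val + 1) % n = 0 ∧ j.val + 1 = n) := by
      rcases Nat.lt_or_ge (j.val + 1) n with h | h
      · exact Or.inl ⟨Nat.mod_eq_of_lt h, h⟩
      · right
        have hh : j.val + 1 = n := by omega
        rw [hh, Nat.mod_self]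
        omega
    have m2 : ((i.val + 1) % n = i.val + 1 ∧ i.val + 1 < n) ∨ ((i.val + 1) % n = 0 ∧ i.val + 1 = n) := by
      rcases Nat.lt_or_ge (i.val + 1) n with h | h
      · exact Or.inl ⟨Nat.mod_eq_of_lt h, h⟩
      · right
        have hh : i.val + 1 = n := by omega
        rw [hh, Nat.mod_self]
        omega
    generalize hA : (j.val + 1) % n = A at m1 ⊢
    generalize hB : (i.val + 1) % n = B at m2 ⊢
    by_cases hz0 : i.val = 0 <;> by_cases hw0 : j.val = 0
    · refine iff_of_false ?_ (by omega)
      rw [hz0, hw0]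
      exact G.irrefl
    · rw [hz0, hF0, hFadj0 j.val (by omega) hjv]
      omega
    · rw [SimpleGraph.adj_comm, hw0, hF0, hFadj0 i.val (by omega) hiv]
      omega
    · rw [hFpp i.val j.val (by omega) hiv (by omega) hjv]
      omega

lemma rev_path {G : SimpleGraph V} {n : ℕ} {p : Fin n → V} (hp : IsIndPath G n p) :
    IsIndPath G n (p ∘ Fin.rev) := by
  refine ⟨hp.1.comp Fin.rev_injective, ?_⟩
  intro i j
  have hi := i.isLt
  have hj := j.isLt
  show G.Adj (p i.rev) (p j.rev) ↔ _
  rw [hp.2]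
  rw [Fin.val_rev, Fin.val_rev]
  omega

lemma get_out {G : SimpleGraph V} {IR : Set V} (hIR : IsIrredundantSet G IR) {y : V}
    (hy : y ∈ IR) (v : V) (hne : cnbr G v ≠ cnbr G y) :
    ∃ a, a ∈ cnbr G v ∧ a ∉ cnbr G y := by
  by_contra h
  push_neg at h
  exact hIR.2.1 y hy v (ssubset_iff_subset_ne.mpr ⟨fun a ha => h a ha, hne⟩)

lemma cast_path {G : SimpleGraph V} {n n' : ℕ} (h : n = n') {p : Fin n → V}
    (hp : IsIndPath G n p) : ∃ q : Fin n' → V, IsIndPath G n' q := by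
  subst h; exact ⟨p, hp⟩

lemma snoc_at {n : ℕ} (p : Fin n → V) (x : V) (i : ℕ) (h : i < n) :
    (Fin.snoc p x : Fin (n + 1) → V) ⟨i, by omega⟩ = p ⟨i, h⟩ := by
  have he : (⟨i, by omega⟩ : Fin (n + 1)) = Fin.castSucc ⟨i, h⟩ := rfl
  rw [he, Fin.snoc_castSucc]

lemma snoc_top {n : ℕ} (p : Fin n → V) (x : V) :
    (Fin.snoc p x : Fin (n + 1) → V) ⟨n, by omega⟩ = x := by
  have he : (⟨n, by omega⟩ : Fin (n + 1)) = Fin.last n := rfl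
  rw [he, Fin.snoc_last]

lemma ext_end {G : SimpleGraph V} (hch : Chordal G) {n : ℕ} (hn : 2 ≤ n) {p : Fin n → V}
    (hp : IsIndPath G n p) {x : V} {i j : Fin n} (hi : i.val = n - 1) (hj : j.val = n - 2)
    (hx1 : x ∈ cnbr G (p i)) (hx2 : x ∉ cnbr G (p j)) :
    IsIndPath G (n + 1) (Fin.snoc p x) := by
  rw [mem_cnbr] at hx1
  have hx2' : ¬ x = p j ∧ ¬ G.Adj (p j) x := by
    constructor
    · intro h; exact hx2 (mem_cnbr.mpr (Or.inl h))
    · intro h; exact hx2 (mem_cnbr.mpr (Or.inr h))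
  have hpji : G.Adj (p j) (p i) := by
    have hilt := i.isLt
    exact (hp.2 j i).mpr (Or.inl (by omega))
  have hadj : G.Adj (p i) x := by
    rcases hx1 with h | h
    · exact absurd (h ▸ hpji) hx2'.2
    · exact h
  have hpieq : p ⟨n - 1, by omega⟩ = p i := congrArg p (Fin.ext (show n - 1 = i.val by omega))
  -- main claim : x is not adjacent/equal to any p i2 with i2.val ≤ n - 2
  have main0 : ∀ d : ℕ, ∀ i2 : Fin n, i2.val ≤ n - 2 → n - 2 - i2.val ≤ d →
      ¬ G.Adj x (p i2) ∧ x ≠ p i2 := by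
    intro d
    induction d with
    | zero =>
      intro i2 h1 h2
      have he : i2 = j := Fin.ext (by omega)
      rw [he]
      exact ⟨fun h => hx2'.2 h.symm, hx2'.1⟩
    | succ d ih =>
      intro i2 h1 h2
      by_cases hcase : i2.val = n - 2
      · have he : i2 = j := Fin.ext (by omega)
        rw [he]
        exact ⟨fun h => hx2'.2 h.symm, hx2'.1⟩
      · have hne2 : x ≠ p i2 := by
          intro heq
          have hA : G.Adj (p i2) (p ⟨i2.val + 1, by have := i2.isLt; omega⟩) :=
            (hp.2 i2 ⟨i2.val + 1, by have := i2.isLt; omega⟩).mpr (Or.inl rfl)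
          rw [← heq] at hA
          exact (ih ⟨i2.val + 1, by have := i2.isLt; omega⟩
            (show i2.val + 1 ≤ n - 2 by omega) (show n - 2 - (i2.val + 1) ≤ d by omega)).1 hA
        refine ⟨fun hA => ?_, hne2⟩
        have hpi2eq : p (⟨i2.val, i2.isLt⟩ : Fin n) = p i2 := congrArg p (Fin.ext rfl)
        refine fan_lemma hch hp (lo := i2.val) (hi := n - 1) (by omega) (by omega)
          (hpi2eq ▸ hA) (hpieq ▸ hadj.symm) ?_
        intro i3 hlt1 hlt2
        exact ih i3 (by omega) (by omega)
  have main : ∀ i2 : Fin n, i2.val ≤ n - 2 → ¬ G.Adj x (p i2) ∧ x ≠ p i2 :=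
    fun i2 h => main0 n i2 h (by omega)
  have hne : ∀ i2 : Fin n, x ≠ p i2 := by
    intro i2
    by_cases h : i2.val ≤ n - 2
    · exact (main i2 h).2
    · have he2 : i2 = i := Fin.ext (by have := i2.isLt; omega)
      rw [he2]
      exact hadj.ne'
  have hadjx : ∀ i2 : Fin n, G.Adj x (p i2) ↔ i2.val = n - 1 := by
    intro i2
    constructor
    · intro h
      by_contra hc
      have hile : i2.val ≤ n - 2 := by have := i2.isLt; omega
      exact (main i2 hile).1 h
    · intro h
      have he2 : i2 = i := Fin.ext (by omega)
      rw [he2]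
      exact hadj.symm
  constructor
  · intro s t h
    rcases Fin.eq_castSucc_or_eq_last s with ⟨s', rfl⟩ | rfl <;>
      rcases Fin.eq_castSucc_or_eq_last t with ⟨t', rfl⟩ | rfl
    · rw [Fin.snoc_castSucc, Fin.snoc_castSucc] at h
      rw [hp.1 h]
    · rw [Fin.snoc_castSucc, Fin.snoc_last] at h
      exact absurd h.symm (hne s')
    · rw [Fin.snoc_castSucc, Fin.snoc_last] at h
      exact absurd h (hne t')
    · rfl
  · intro s t
    rcases Fin.eq_castSucc_or_eq_last s with ⟨s', rfl⟩ | rfl <;>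
      rcases Fin.eq_castSucc_or_eq_last t with ⟨t', rfl⟩ | rfl
    · rw [Fin.snoc_castSucc, Fin.snoc_castSucc, hp.2]
      simp only [Fin.coe_castSucc]
    · rw [Fin.snoc_castSucc, Fin.snoc_last, SimpleGraph.adj_comm, hadjx]
      simp only [Fin.coe_castSucc, Fin.val_last]
      have := s'.isLt
      omega
    · rw [Fin.snoc_castSucc, Fin.snoc_last, hadjx]
      simp only [Fin.coe_castSucc, Fin.val_last]
      have := t'.isLt
      omega
    · rw [Fin.snoc_last]
      refine iff_of_false G.irrefl ?_
      simp only [Fin.val_last]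
      omega

lemma no_path {G : SimpleGraph V} {IR : Set V} (hch : Chordal G) {k : ℕ} (hk : 6 ≤ k)
    (hPk : PkFree G k) (hIR : IsIrredundantSet G IR) {m : ℕ} (hm : m + 4 = k)
    {p : Fin m → V} (hsub : ∀ i2, p i2 ∈ IR) (hp : IsIndPath G m p) : False := by
  have hm2 : 2 ≤ m := by omega
  -- P1 = reversed path  [p_{m-1}, ..., p_0]
  have hP1 : IsIndPath G m (p ∘ Fin.rev) := rev_path hp
  have e0 : (p ∘ Fin.rev) ⟨m - 1, by omega⟩ = p ⟨0, by omega⟩ :=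
    congrArg p (Fin.ext (by rw [Fin.val_rev]; show m - (m - 1 + 1) = 0; omega))
  have e1 : (p ∘ Fin.rev) ⟨m - 2, by omega⟩ = p ⟨1, by omega⟩ :=
    congrArg p (Fin.ext (by rw [Fin.val_rev]; show m - (m - 2 + 1) = 1; omega))
  -- adjacency of consecutive original vertices
  have adj01 : G.Adj (p ⟨0, by omega⟩) (p ⟨1, by omega⟩) :=
    (hp.2 _ _).mpr (Or.inl (show 0 + 1 = 1 by omega))
  have adjmm : G.Adj (p ⟨m - 1, by omega⟩) (p ⟨m - 2, by omega⟩) :=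
    (hp.2 _ _).mpr (Or.inr (show m - 2 + 1 = m - 1 by omega))
  -- choose a ∈ N[p 0] \ N[p 1]
  have hne01 : cnbr G (p ⟨0, by omega⟩) ≠ cnbr G (p ⟨1, by omega⟩) := by
    refine hIR.2.2 _ (hsub _) _ (hsub _) ?_
    intro h
    have h2 := hp.1 h
    have h3 : (0 : ℕ) = 1 := congrArg Fin.val h2
    omega
  obtain ⟨a, ha1, ha2⟩ := get_out hIR (hsub ⟨1, by omega⟩) (p ⟨0, by omega⟩) hne01
  -- P2 = [p_{m-1}, ..., p_0, a]
  have hP2 : IsIndPath G (m + 1) (Fin.snoc (p ∘ Fin.rev) a) :=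
    ext_end hch (by omega) hP1 (i := ⟨m - 1, by omega⟩) (j := ⟨m - 2, by omega⟩)
      (show m - 1 = m - 1 by rfl) (show m - 2 = m - 2 by rfl)
      (by rw [e0]; exact ha1) (by rw [e1]; exact ha2)
  have v2a : (Fin.snoc (p ∘ Fin.rev) a : Fin (m + 1) → V) ⟨m, by omega⟩ = a :=
    snoc_top _ _
  have v2p0 : (Fin.snoc (p ∘ Fin.rev) a : Fin (m + 1) → V) ⟨m - 1, by omega⟩
      = p ⟨0, by omega⟩ := by
    rw [snoc_at _ _ (m - 1) (by omega)]; exact e0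
  have v2p1 : (Fin.snoc (p ∘ Fin.rev) a : Fin (m + 1) → V) ⟨m - 2, by omega⟩
      = p ⟨1, by omega⟩ := by
    rw [snoc_at _ _ (m - 2) (by omega)]; exact e1
  -- choose b ∈ N[a] \ N[p 0]
  have hneb : cnbr G a ≠ cnbr G (p ⟨0, by omega⟩) := by
    intro hEq
    have hmem : p ⟨1, by omega⟩ ∈ cnbr G (p ⟨0, by omega⟩) := mem_cnbr.mpr (Or.inr adj01)
    rw [← hEq] at hmem
    rcases mem_cnbr.mp hmem with h | h
    · have h2 := hP2.1 (show (Fin.snoc (p ∘ Fin.rev) a : Fin (m + 1) → V) ⟨m - 2, by omega⟩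
        = (Fin.snoc (p ∘ Fin.rev) a : Fin (m + 1) → V) ⟨m, by omega⟩ by
          rw [v2p1, v2a]; exact h)
      have h3 : m - 2 = m := congrArg Fin.val h2
      omega
    · have h2 := (hP2.2 ⟨m, by omega⟩ ⟨m - 2, by omega⟩).mp (by rw [v2a, v2p1]; exact h)
      have h3 : (m + 1 = m - 2 ∨ m - 2 + 1 = m) := h2
      omega
  obtain ⟨b, hb1, hb2⟩ := get_out hIR (hsub ⟨0, by omega⟩) a hneb
  -- P3 = [p_{m-1}, ..., p_0, a, b]
  have hP3 : IsIndPath G (m + 2) (Fin.snoc (Fin.snoc (p ∘ Fin.rev) a) b) :=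
    ext_end hch (by omega) hP2 (i := ⟨m, by omega⟩) (j := ⟨m - 1, by omega⟩)
      (show m = m + 1 - 1 by omega) (show m - 1 = m + 1 - 2 by omega)
      (by rw [v2a]; exact hb1) (by rw [v2p0]; exact hb2)
  -- P4 = [b, a, p_0, ..., p_{m-1}]
  have hP4 : IsIndPath G (m + 2) ((Fin.snoc (Fin.snoc (p ∘ Fin.rev) a) b) ∘ Fin.rev) :=
    rev_path hP3
  have v3 : ∀ t (h : t < m), (Fin.snoc (Fin.snoc (p ∘ Fin.rev) a) b : Fin (m + 2) → V)
      ⟨t, by omega⟩ = p ⟨m - 1 - t, by omega⟩ := by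
    intro t h
    rw [snoc_at _ _ t (by omega), snoc_at _ _ t h]
    exact congrArg p (Fin.ext (by rw [Fin.val_rev]; show m - (t + 1) = m - 1 - t; omega))
  have v4a : ((Fin.snoc (Fin.snoc (p ∘ Fin.rev) a) b) ∘ Fin.rev) (⟨m + 1, by omega⟩ : Fin (m + 2))
      = p ⟨m - 1, by omega⟩ := by
    show (Fin.snoc (Fin.snoc (p ∘ Fin.rev) a) b : Fin (m + 2) → V)
      (Fin.rev ⟨m + 1, by omega⟩) = _
    rw [show Fin.rev (⟨m + 1, by omega⟩ : Fin (m + 2)) = ⟨0, by omega⟩ from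
      Fin.ext (by rw [Fin.val_rev]; show m + 2 - (m + 1 + 1) = 0; omega)]
    rw [v3 0 (by omega)]
    exact congrArg p (Fin.ext (show m - 1 - 0 = m - 1 by omega))
  have v4b : ((Fin.snoc (Fin.snoc (p ∘ Fin.rev) a) b) ∘ Fin.rev) (⟨m, by omega⟩ : Fin (m + 2))
      = p ⟨m - 2, by omega⟩ := by
    show (Fin.snoc (Fin.snoc (p ∘ Fin.rev) a) b : Fin (m + 2) → V)
      (Fin.rev ⟨m, by omega⟩) = _
    rw [show Fin.rev (⟨m, by omega⟩ : Fin (m + 2)) = ⟨1, by omega⟩ from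
      Fin.ext (by rw [Fin.val_rev]; show m + 2 - (m + 1) = 1; omega)]
    rw [v3 1 (by omega)]
    exact congrArg p (Fin.ext (show m - 1 - 1 = m - 2 by omega))
  -- choose c ∈ N[p (m-1)] \ N[p (m-2)]
  have hnemm : cnbr G (p ⟨m - 1, by omega⟩) ≠ cnbr G (p ⟨m - 2, by omega⟩) := by
    refine hIR.2.2 _ (hsub _) _ (hsub _) ?_
    intro h
    have h2 := hp.1 h
    have h3 : m - 1 = m - 2 := congrArg Fin.val h2
    omega
  obtain ⟨c, hc1, hc2⟩ := get_out hIR (hsub ⟨m - 2, by omega⟩) (p ⟨m - 1, by omega⟩) hnemm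
  -- P5 = [b, a, p_0, ..., p_{m-1}, c]
  have hP5 : IsIndPath G (m + 3)
      (Fin.snoc ((Fin.snoc (Fin.snoc (p ∘ Fin.rev) a) b) ∘ Fin.rev) c) :=
    ext_end hch (by omega) hP4 (i := ⟨m + 1, by omega⟩) (j := ⟨m, by omega⟩)
      (show m + 1 = m + 2 - 1 by omega) (show m = m + 2 - 2 by omega)
      (by rw [v4a]; exact hc1) (by rw [v4b]; exact hc2)
  have v5c : (Fin.snoc ((Fin.snoc (Fin.snoc (p ∘ Fin.rev) a) b) ∘ Fin.rev) c :
      Fin (m + 3) → V) ⟨m + 2, by omega⟩ = c := snoc_top _ _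
  have v5p : (Fin.snoc ((Fin.snoc (Fin.snoc (p ∘ Fin.rev) a) b) ∘ Fin.rev) c :
      Fin (m + 3) → V) ⟨m, by omega⟩ = p ⟨m - 2, by omega⟩ := by
    rw [snoc_at _ _ m (by omega)]; exact v4b
  have v5q : (Fin.snoc ((Fin.snoc (Fin.snoc (p ∘ Fin.rev) a) b) ∘ Fin.rev) c :
      Fin (m + 3) → V) ⟨m + 1, by omega⟩ = p ⟨m - 1, by omega⟩ := by
    rw [snoc_at _ _ (m + 1) (by omega)]; exact v4a
  -- choose d ∈ N[c] \ N[p (m-1)]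
  have hned : cnbr G c ≠ cnbr G (p ⟨m - 1, by omega⟩) := by
    intro hEq
    have hmem : p ⟨m - 2, by omega⟩ ∈ cnbr G (p ⟨m - 1, by omega⟩) :=
      mem_cnbr.mpr (Or.inr adjmm)
    rw [← hEq] at hmem
    rcases mem_cnbr.mp hmem with h | h
    · have h2 := hP5.1 (show (Fin.snoc ((Fin.snoc (Fin.snoc (p ∘ Fin.rev) a) b) ∘ Fin.rev) c :
        Fin (m + 3) → V) ⟨m, by omega⟩
        = (Fin.snoc ((Fin.snoc (Fin.snoc (p ∘ Fin.rev) a) b) ∘ Fin.rev) c :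
        Fin (m + 3) → V) ⟨m + 2, by omega⟩ by rw [v5p, v5c]; exact h)
      have h3 : m = m + 2 := congrArg Fin.val h2
      omega
    · have h2 := (hP5.2 ⟨m + 2, by omega⟩ ⟨m, by omega⟩).mp (by rw [v5c, v5p]; exact h)
      have h3 : (m + 2 + 1 = m ∨ m + 1 = m + 2) := h2
      omega
  obtain ⟨d, hd1, hd2⟩ := get_out hIR (hsub ⟨m - 1, by omega⟩) c hned
  -- P6 = [b, a, p_0, ..., p_{m-1}, c, d]
  have hP6 : IsIndPath G (m + 4)
      (Fin.snoc (Fin.snoc ((Fin.snoc (Fin.snoc (p ∘ Fin.rev) a) b) ∘ Fin.rev) c) d) :=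
    ext_end hch (by omega) hP5 (i := ⟨m + 2, by omega⟩) (j := ⟨m + 1, by omega⟩)
      (show m + 2 = m + 3 - 1 by omega) (show m + 1 = m + 3 - 2 by omega)
      (by rw [v5c]; exact hd1) (by rw [v5q]; exact hd2)
  obtain ⟨q, hq⟩ := cast_path hm hP6
  exact hPk ⟨q, hq⟩

/-- If `G` is `P_k`-free chordal (`k ≥ 6`) and `C` is an irredundant
component, then `G[C]` is `P_{k-4}`-free and chordal. -/
theorem stmt_6 [Fintype V] (k : ℕ) (hk : 6 ≤ k) (G : SimpleGraph V)
    (hch : Chordal G) (hPk : PkFree G k)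
    (IR : Set V) (hIR : IsIrredundantSet G IR)
    (C : Set V) (hC : IsCompOf G IR C) :
    PkFree (G.induce C) (k - 4) ∧ Chordal (G.induce C) := by
  constructor
  · rintro ⟨f, hfinj, hfadj⟩
    refine no_path hch hk hPk hIR (m := k - 4) (by omega) (p := fun i => (f i : V))
      (fun i => hC.1 (f i).2) ⟨fun i j h => hfinj (Subtype.ext h), fun i j => hfadj i j⟩
  · intro n hn h
    obtain ⟨f, hfi, hfa⟩ := h
    exact hch n hn ⟨fun z => (f z : V), fun z w hzw => hfi (Subtype.ext hzw),
      fun i j => hfa i j⟩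
end

section
/- Let G be a finite simple chordal graph, IR an irredundant set of G, a ∈ RN = V(G) \ IR a redundant vertex, C an irredundant component of G, and u, v two vertices of C ∩ N(a). Then every induced path from u to v in the induced subgraph G[C] is entirely contained in N(a). In particular, the subgraph induced on N(a) ∩ C is connected. -/
variable {V : Type*}

private lemma exists_induced_path_aux {W : Type*} (H : SimpleGraph W) :
    ∀ n : ℕ, ∀ x y : W, ∀ f : ℕ → W, f 0 = x → f n = y →
      (∀ t, t < n → H.Adj (f t) (f (t + 1))) →
    ∃ m : ℕ, ∃ g : ℕ → W, g 0 = x ∧ g m = y ∧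
      (∀ s, s ≤ m → ∀ t, t ≤ m → g s = g t → s = t) ∧
      (∀ s, s ≤ m → ∀ t, t ≤ m → (H.Adj (g s) (g t) ↔ (s + 1 = t ∨ t + 1 = s))) := by
  intro n
  induction n using Nat.strong_induction_on with
  | _ n IH =>
  intro x y f hf0 hfn hadj
  by_cases hbad : ∃ s t, s < t ∧ t ≤ n ∧ (f s = f t ∨ (H.Adj (f s) (f t) ∧ s + 1 < t))
  · obtain ⟨s, t, hst, htn, hcase⟩ := hbad
    rcases hcase with heq | ⟨hAdj, hgap⟩
    · obtain ⟨d, hd1, hts⟩ : ∃ d, 1 ≤ d ∧ t = s + d := ⟨t - s, by omega, by omega⟩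
      refine IH (n - d) (by omega) x y (fun r => if r ≤ s then f r else f (r + d)) ?_ ?_ ?_
      · simp [hf0]
      · by_cases hns : n - d ≤ s
        · have h2 : n - d = s := by omega
          have h1 : n = t := by omega
          simp only [if_pos hns]
          rw [h2, heq, ← h1, hfn]
        · simp only [if_neg hns]
          rw [show n - d + d = n from by omega, hfn]
      · intro r hr
        by_cases h1 : r + 1 ≤ s
        · simp only [if_pos (by omega : r ≤ s), if_pos h1]
          exact hadj r (by omega)
        · simp only [if_neg h1]
          by_cases h0 : r ≤ s
          · simp only [if_pos h0]
            rw [show r = s from by omega, heq, hts,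
              show s + 1 + d = (s + d) + 1 from by omega]
            exact hadj (s + d) (by omega)
          · simp only [if_neg h0]
            rw [show r + 1 + d = (r + d) + 1 from by omega]
            exact hadj (r + d) (by omega)
    · obtain ⟨d, hd1, hts⟩ : ∃ d, 1 ≤ d ∧ t = s + d + 1 := ⟨t - s - 1, by omega, by omega⟩
      refine IH (n - d) (by omega) x y (fun r => if r ≤ s then f r else f (r + d)) ?_ ?_ ?_
      · simp [hf0]
      · simp only [if_neg (by omega : ¬ n - d ≤ s)]
        rw [show n - d + d = n from by omega, hfn]
      · intro r hr
        by_cases h1 : r + 1 ≤ s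
        · simp only [if_pos (by omega : r ≤ s), if_pos h1]
          exact hadj r (by omega)
        · simp only [if_neg h1]
          by_cases h0 : r ≤ s
          · simp only [if_pos h0]
            rw [show r = s from by omega, show s + 1 + d = t from by omega]
            exact hAdj
          · simp only [if_neg h0]
            rw [show r + 1 + d = (r + d) + 1 from by omega]
            exact hadj (r + d) (by omega)
  · push_neg at hbad
    refine ⟨n, f, hf0, hfn, ?_, ?_⟩
    · intro s hs t ht hft
      by_contra hne
      rcases Nat.lt_or_ge s t with h | h
      · exact (hbad s t h ht).1 hft
      · exact (hbad t s (by omega) hs).1 hft.symm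
    · intro s hs t ht
      constructor
      · intro hA
        rcases lt_trichotomy s t with h | h | h
        · have := (hbad s t h ht).2 hA
          omega
        · subst h
          exact absurd hA (H.irrefl)
        · have := (hbad t s h hs).2 hA.symm
          omega
      · rintro (h | h)
        · exact h ▸ hadj s (by omega)
        · exact (h ▸ hadj t (by omega)).symm


/-- In a chordal graph, for a redundant vertex `a`, an irredundant component
`C` and `u, v ∈ C ∩ N(a)`, every induced path from `u` to `v` in `G[C]` lies in `N(a)`;
in particular `G[N(a) ∩ C]` is connected. -/
theorem stmt_7 [Fintype V] (G : SimpleGraph V) (hch : Chordal G)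
    (IR : Set V) (hIR : IsIrredundantSet G IR)
    (a : V) (ha : a ∉ IR)
    (C : Set V) (hC : IsCompOf G IR C)
    (u v : V) (hu : u ∈ C ∩ G.neighborSet a) (hv : v ∈ C ∩ G.neighborSet a) :
    (∀ (k : ℕ) (hk : 0 < k) (f : Fin k → V),
      (∀ i, f i ∈ C) → Function.Injective f →
      f ⟨0, hk⟩ = u → f ⟨k - 1, Nat.sub_lt hk Nat.one_pos⟩ = v →
      (∀ i j : Fin k, G.Adj (f i) (f j) ↔ (i.val + 1 = j.val ∨ j.val + 1 = i.val)) →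
      ∀ i, f i ∈ G.neighborSet a) ∧
    (G.induce (G.neighborSet a ∩ C)).Connected := by
  classical
  obtain ⟨hCIR, hCne, hCconn, hCclosed⟩ := hC
  have main : ∀ u' v' : V, u' ∈ C ∩ G.neighborSet a → v' ∈ C ∩ G.neighborSet a →
      ∀ (k : ℕ) (hk : 0 < k) (f : Fin k → V),
      (∀ i, f i ∈ C) → Function.Injective f →
      f ⟨0, hk⟩ = u' → f ⟨k - 1, Nat.sub_lt hk Nat.one_pos⟩ = v' →
      (∀ i j : Fin k, G.Adj (f i) (f j) ↔ (i.val + 1 = j.val ∨ j.val + 1 = i.val)) →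
      ∀ i, f i ∈ G.neighborSet a := by
    intro u' v' hu' hv' k hk f hfC hfinj hf0 hflast hind i₀
    by_contra hna
    set p : ℕ → Prop := fun t => ∃ h : t < k, f ⟨t, h⟩ ∈ G.neighborSet a with hpdef
    have hp0 : p 0 := ⟨hk, by rw [hf0]; exact hu'.2⟩
    have hpk : p (k - 1) := ⟨Nat.sub_lt hk Nat.one_pos, by rw [hflast]; exact hv'.2⟩
    have hi₀0 : i₀.val ≠ 0 := by
      intro h
      exact hna (by rw [Fin.ext h (n := k) (b := ⟨0, hk⟩), hf0]; exact hu'.2)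
    have hi₀k : i₀.val ≠ k - 1 := by
      intro h
      exact hna (by
        rw [Fin.ext h (n := k) (b := ⟨k - 1, Nat.sub_lt hk Nat.one_pos⟩), hflast]
        exact hv'.2)
    set i := Nat.findGreatest p (i₀.val - 1) with hidef
    have hpi : p i := Nat.findGreatest_spec (Nat.zero_le _) hp0
    have hile : i ≤ i₀.val - 1 := Nat.findGreatest_le _
    have hQ : ∃ t, i₀.val < t ∧ p t := ⟨k - 1, by have := i₀.isLt; omega, hpk⟩
    set j := Nat.find hQ with hjdef
    have hpj : i₀.val < j ∧ p j := Nat.find_spec hQ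
    have hjmin : ∀ t, t < j → ¬(i₀.val < t ∧ p t) := fun t ht => Nat.find_min hQ ht
    obtain ⟨hik, hfi⟩ := hpi
    obtain ⟨hi₀j, hjq⟩ := hpj
    obtain ⟨hjk, hfj⟩ := hjq
    have hii₀ : i < i₀.val := by omega
    have hbet : ∀ t, i < t → t < j → ¬ p t := by
      intro t h1 h2 hpt
      rcases lt_trichotomy t i₀.val with h | h | h
      · exact Nat.findGreatest_is_greatest h1 (by omega) hpt
      · obtain ⟨hlt, hmem⟩ := hpt
        exact hna (by rwa [Fin.ext h (a := (⟨t, hlt⟩ : Fin k))] at hmem)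
      · exact hjmin t h2 ⟨h, hpt⟩
    have hmemiff : ∀ (t : ℕ) (h : t < k), i ≤ t → t ≤ j →
        (f ⟨t, h⟩ ∈ G.neighborSet a ↔ (t = i ∨ t = j)) := by
      intro t h h1 h2
      constructor
      · intro hm
        by_contra hc
        push_neg at hc
        exact hbet t (by omega) (by omega) ⟨h, hm⟩
      · rintro (rfl | rfl)
        · exact hfi
        · exact hfj
    have hji : i + 2 ≤ j := by omega
    set n := j - i + 2 with hndef
    haveI : NeZero n := ⟨by omega⟩
    haveI : Fact (1 < n) := ⟨by omega⟩
    have hvk : ∀ m : ZMod n, i + m.val - 1 < k := fun m => by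
      have := ZMod.val_lt m; omega
    set g : ZMod n → V := fun m => if m = 0 then a else f ⟨i + m.val - 1, hvk m⟩
      with hgdef
    have hg0 : g 0 = a := by simp [hgdef]
    have hgpos : ∀ m : ZMod n, m ≠ 0 → g m = f ⟨i + m.val - 1, hvk m⟩ := by
      intro m hm; simp [hgdef, hm]
    have hsucc : ∀ m m' : ZMod n, m = m' + 1 ↔
        ((m'.val + 1 < n ∧ m.val = m'.val + 1) ∨ (m'.val + 1 = n ∧ m.val = 0)) := by
      intro m m'
      have hlt' := ZMod.val_lt m'
      have hv1 : (m' + 1).val = (m'.val + 1) % n := by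
        rw [ZMod.val_add, ZMod.val_one]
      constructor
      · rintro rfl
        by_cases hc : m'.val + 1 < n
        · exact Or.inl ⟨hc, by rw [hv1, Nat.mod_eq_of_lt hc]⟩
        · have h1 : m'.val + 1 = n := by omega
          exact Or.inr ⟨h1, by rw [hv1, h1, Nat.mod_self]⟩
      · rintro (⟨h1, h2⟩ | ⟨h1, h2⟩)
        · exact ZMod.val_injective n (by rw [hv1, Nat.mod_eq_of_lt h1, h2])
        · exact ZMod.val_injective n (by rw [hv1, h1, Nat.mod_self, h2])
    have h01 : (0 : ZMod n) ≠ 1 := by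
      intro h
      have := congrArg ZMod.val h
      rw [ZMod.val_zero, ZMod.val_one] at this
      omega
    refine hch n (by omega) ⟨g, ?_, ?_⟩
    · intro m m' hmm
      by_cases h1 : m = 0 <;> by_cases h2 : m' = 0
      · rw [h1, h2]
      · exfalso
        rw [h1, hg0, hgpos m' h2] at hmm
        exact ha (hCIR (by rw [hmm]; exact hfC _))
      · exfalso
        rw [h2, hg0, hgpos m h1] at hmm
        exact ha (hCIR (by rw [← hmm]; exact hfC _))
      · rw [hgpos m h1, hgpos m' h2] at hmm
        have hv : i + m.val - 1 = i + m'.val - 1 := congrArg Fin.val (hfinj hmm)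
        have hm1 : m.val ≠ 0 := fun h => h1 ((ZMod.val_eq_zero m).mp h)
        have hm2 : m'.val ≠ 0 := fun h => h2 ((ZMod.val_eq_zero m').mp h)
        exact ZMod.val_injective n (by omega)
    · intro m m'
      by_cases h1 : m = 0 <;> by_cases h2 : m' = 0
      · subst h1; subst h2
        rw [hg0]
        simp only [zero_add]
        constructor
        · intro hA
          exact absurd hA (G.irrefl)
        · rintro (h | h) <;> exact absurd h h01
      · subst h1
        rw [hg0, hgpos m' h2]
        have hm2 : m'.val ≠ 0 := fun h => h2 ((ZMod.val_eq_zero m').mp h)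
        have hlt' := ZMod.val_lt m'
        have hL : G.Adj a (f ⟨i + m'.val - 1, hvk m'⟩) ↔
            (i + m'.val - 1 = i ∨ i + m'.val - 1 = j) := by
          rw [← SimpleGraph.mem_neighborSet]
          exact hmemiff _ _ (by omega) (by omega)
        rw [hL, hsucc 0 m', hsucc m' 0, ZMod.val_zero]
        omega
      · subst h2
        rw [hgpos m h1, hg0]
        have hm1 : m.val ≠ 0 := fun h => h1 ((ZMod.val_eq_zero m).mp h)
        have hlt := ZMod.val_lt m
        have hL : G.Adj (f ⟨i + m.val - 1, hvk m⟩) a ↔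
            (i + m.val - 1 = i ∨ i + m.val - 1 = j) := by
          rw [SimpleGraph.adj_comm, ← SimpleGraph.mem_neighborSet]
          exact hmemiff _ _ (by omega) (by omega)
        rw [hL, hsucc m 0, hsucc 0 m, ZMod.val_zero]
        omega
      · rw [hgpos m h1, hgpos m' h2, hind, hsucc m m', hsucc m' m]
        have hm1 : m.val ≠ 0 := fun h => h1 ((ZMod.val_eq_zero m).mp h)
        have hm2 : m'.val ≠ 0 := fun h => h2 ((ZMod.val_eq_zero m').mp h)
        have hlt := ZMod.val_lt m
        have hlt' := ZMod.val_lt m'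
        simp only [Fin.val_mk]
        omega
  refine ⟨fun k hk f hfC hfinj hf0 hfl hind => main u v hu hv k hk f hfC hfinj hf0 hfl hind, ?_⟩
  rw [SimpleGraph.connected_iff]
  refine ⟨?_, ⟨⟨u, hu.2, hu.1⟩⟩⟩
  rintro ⟨x, hxa, hxC⟩ ⟨y, hya, hyC⟩
  obtain ⟨w⟩ : (G.induce C).Reachable ⟨x, hxC⟩ ⟨y, hyC⟩ := hCconn.preconnected _ _
  obtain ⟨m, g, hg0, hgm, hginj, hgadj⟩ :=
    exists_induced_path_aux (G.induce C) w.length ⟨x, hxC⟩ ⟨y, hyC⟩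
      (fun t => w.getVert t) w.getVert_zero w.getVert_length
      (fun t ht => w.adj_getVert_succ ht)
  set F : Fin (m + 1) → V := fun r => (g r.val : V) with hFdef
  have hFC : ∀ r, F r ∈ C := fun r => (g r.val).2
  have hFinj : Function.Injective F := by
    intro r r' h
    exact Fin.ext (hginj r.val (by omega) r'.val (by omega) (Subtype.ext h))
  have hF0 : F ⟨0, Nat.succ_pos m⟩ = x := by
    show ((g 0 : V)) = x
    rw [hg0]
  have hFm : F ⟨m + 1 - 1, Nat.sub_lt (Nat.succ_pos m) Nat.one_pos⟩ = y := by
    show ((g m : V)) = y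
    rw [hgm]
  have hFind : ∀ r r' : Fin (m + 1),
      G.Adj (F r) (F r') ↔ (r.val + 1 = r'.val ∨ r'.val + 1 = r.val) := by
    intro r r'
    exact hgadj r.val (by omega) r'.val (by omega)
  have hFa : ∀ r : Fin (m + 1), F r ∈ G.neighborSet a :=
    main x y ⟨hxC, hxa⟩ ⟨hyC, hya⟩ (m + 1) (Nat.succ_pos m) F hFC hFinj hF0 hFm hFind
  have hga : ∀ t : ℕ, t ≤ m → ((g t : V) ∈ G.neighborSet a ∩ C) := by
    intro t ht
    exact ⟨hFa ⟨t, by omega⟩, (g t).2⟩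
  have chain : ∀ t : ℕ, ∀ ht : t ≤ m,
      (G.induce (G.neighborSet a ∩ C)).Reachable ⟨x, hxa, hxC⟩ ⟨(g t : V), hga t ht⟩ := by
    intro t
    induction t with
    | zero =>
      intro ht
      have he : (⟨(g 0 : V), hga 0 ht⟩ : ↑(G.neighborSet a ∩ C)) = ⟨x, hxa, hxC⟩ :=
        Subtype.ext (show (g 0 : V) = x by rw [hg0])
      rw [he]
    | succ t ih =>
      intro ht
      refine (ih (by omega)).trans (SimpleGraph.Adj.reachable ?_)
      have hadj2 : (G.induce C).Adj (g t) (g (t + 1)) :=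
        (hgadj t (by omega) (t + 1) (by omega)).mpr (Or.inl rfl)
      exact hadj2
  have hxy := chain m le_rfl
  have he : (⟨(g m : V), hga m le_rfl⟩ : ↑(G.neighborSet a ∩ C)) = ⟨y, hya, hyC⟩ :=
    Subtype.ext (show (g m : V) = y by rw [hgm])
  rwa [he] at hxy
end
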